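/- arXiv:2401.04756 — 7 statements merged into one kernel-verified Lean document; each statement's English description precedes it below -/
import Mathlib

section
/- Let p be a prime number, let H be a subgroup of 𝔽_p^×, and let a ∈ 𝔽_p^×. Then |∑_{y∈H} e(ay/p)| ≤ √p. -/
/-!
Put `f t = ∑_{y ∈ H} e(ty/p)`. Since `H` is a group, `f` is constant on the coset `aH`, which has
`|H|` elements, while Parseval for the additive characters of `𝔽_p` gives `∑_t |f t|² = p |H|`.
Hence `|H| |f a|² ≤ p |H|`.
-/

open Finset

/-- `eChar p x` is `e(x/p) = exp(2πi x̃/p)` where `x̃` is the integer representative of `x`. -/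
noncomputable def eChar (p : ℕ) (x : ZMod p) : ℂ :=
  Complex.exp (2 * Real.pi * Complex.I * (x.val : ℂ) / p)

lemma eChar_eq_stdAddChar (p : ℕ) [NeZero p] (x : ZMod p) : eChar p x = ZMod.stdAddChar x := by
  rw [ZMod.stdAddChar_apply, ZMod.toCircle_apply, eChar]

namespace AddChar

variable {R : Type*} [CommRing R] [Fintype R] {ψ : AddChar R ℂ}

theorem sum_norm_sq_sum_mul_eq (hψ : ψ.IsPrimitive) {ι : Type*} [Fintype ι] {v : ι → R}
    (hv : Function.Injective v) :
    ∑ t : R, ‖∑ i, ψ (t * v i)‖ ^ 2 = Fintype.card R * Fintype.card ι := by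
  classical
  suffices h : ∑ t : R, ((‖∑ i, ψ (t * v i)‖ ^ 2 : ℝ) : ℂ) =
      (Fintype.card R * Fintype.card ι : ℂ) by
    exact_mod_cast h
  calc ∑ t : R, ((‖∑ i, ψ (t * v i)‖ ^ 2 : ℝ) : ℂ)
      = ∑ t, ∑ i, ∑ j, ψ (t * v i) * ψ (-(t * v j)) := by
        simp_rw [Complex.ofReal_pow, ← Complex.mul_conj', map_sum, map_neg_eq_conj, sum_mul_sum]
    _ = ∑ i, ∑ j, ∑ t, ψ (t * (v i - v j)) := by
        rw [sum_comm]
        refine sum_congr rfl fun i _ ↦ ?_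
        rw [sum_comm]
        simp_rw [← map_add_eq_mul, mul_sub, sub_eq_add_neg]
    _ = ∑ i : ι, ∑ j : ι, if i = j then (Fintype.card R : ℂ) else 0 := by
        simp [sum_mulShift _ hψ, sub_eq_zero, hv.eq_iff]
    _ = Fintype.card R * Fintype.card ι := by
        simp [mul_comm]

end AddChar

lemma Subgroup.sum_mul_coe_mul_eq {R M : Type*} [Monoid R] [AddCommMonoid M]
    (H : Subgroup Rˣ) [Fintype H] (g : R → M) (t : R) (h : H) :
    ∑ y : H, g (t * ((h : Rˣ) : R) * ((y : Rˣ) : R)) = ∑ y : H, g (t * ((y : Rˣ) : R)) :=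
  Fintype.sum_equiv (Equiv.mulLeft h) _ _ fun y ↦ by simp [mul_assoc]

lemma Subgroup.card_mul_le_sum_of_mul_invariant {R : Type*} [Monoid R] [Fintype R]
    (H : Subgroup Rˣ) [Fintype H] {F : R → ℝ} (hF₀ : ∀ t, 0 ≤ F t)
    (hF : ∀ (t : R) (h : H), F (t * ((h : Rˣ) : R)) = F t) (a : Rˣ) :
    Fintype.card H * F a ≤ ∑ t, F t := by
  have hinj : Function.Injective fun h : H ↦ ((a * (h : Rˣ) : Rˣ) : R) := fun x y hxy ↦
    Subtype.ext (mul_left_cancel (Units.ext hxy))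
  calc Fintype.card H * F a = ∑ h : H, F ((a * (h : Rˣ) : Rˣ) : R) := by simp [hF]
    _ = ∑ t ∈ univ.map ⟨_, hinj⟩, F t := (sum_map univ ⟨_, hinj⟩ F).symm
    _ ≤ ∑ t, F t := sum_le_univ_sum_of_nonneg hF₀

theorem AddChar.norm_sum_subgroup_le_sqrt_card {R : Type*} [CommRing R] [Fintype R]
    {ψ : AddChar R ℂ} (hψ : ψ.IsPrimitive) (H : Subgroup Rˣ) [Fintype H] (a : Rˣ) :
    ‖∑ y : H, ψ (a * ((y : Rˣ) : R))‖ ≤ √(Fintype.card R) := by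
  set F : R → ℝ := fun t ↦ ‖∑ y : H, ψ (t * ((y : Rˣ) : R))‖ ^ 2
  have hcoset := H.card_mul_le_sum_of_mul_invariant (F := F) (fun _ ↦ by positivity)
    (fun t h ↦ by simp only [F, H.sum_mul_coe_mul_eq]) a
  rw [sum_norm_sq_sum_mul_eq hψ (v := fun y : H ↦ ((y : Rˣ) : R))
    (Units.val_injective.comp Subtype.val_injective), mul_comm] at hcoset
  exact Real.le_sqrt_of_sq_le (le_of_mul_le_mul_right hcoset (by simp [Fintype.card_pos]))

open scoped Classical in
/-- For `p` prime, `H` a subgroup of `𝔽_p^×` and `a ∈ 𝔽_p^×`, one has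
`|∑_{y∈H} e(ay/p)| ≤ √p`. -/
theorem subgroup_sum_le_sqrt (p : ℕ) [Fact p.Prime] (H : Subgroup (ZMod p)ˣ)
    (a : (ZMod p)ˣ) :
    ‖∑ y : H, eChar p ((a * (y : (ZMod p)ˣ) : (ZMod p)ˣ) : ZMod p)‖
      ≤ Real.sqrt p := by
  simpa [eChar_eq_stdAddChar] using
    AddChar.norm_sum_subgroup_le_sqrt_card (ZMod.isPrimitive_stdAddChar p) H a
end

section
/- Let G be a group, let A ⊆ G be a nonempty finite subset, and let α ≥ 1 be a real number such that the multiplicative energy satisfies E(A,A) ≥ |A|³/α. Then there exists a subset B ⊆ A such that |B| ≥ |A|/(4α) and |B·B⁻¹| ≤ 2¹⁴·α⁶·|B|. -/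
/-!
Let `r(y)` count the pairs `(a, a') ∈ A²` with `a⁻¹ * a' = y`, and give the edge `(x, b) ∈ A²` of a
bipartite graph the weight `r(b * x⁻¹)`; its total weight `T` is exactly `E(A, A) ≥ |A|³/α`.
Call `b, u` weakly connected when their weighted number of common neighbours
`ω(b, u) = ∑ₓ r(b x⁻¹) r(u x⁻¹)` is below `θ = T²/(24|A|³)`. Averaging over `x` gives a vertex of
large degree whose neighbourhood carries little weight on weakly connected pairs; discarding the
neighbours with much weak weight leaves a large set `B`, any two vertices of which have many common
neighbours `u` strongly connected to both. Each such `u` gives at least `θ²` representations of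
`b * b'⁻¹` as a product of four quotients `a⁻¹ * a'` of elements of `A`, different `u` giving
different representations, while there are only `|A|⁸` such products.
-/
open scoped Pointwise
open Finset

namespace BalogSzemerediGowers

section WeightedBipartite

variable {ι κ : Type*}

def codegree (X : Finset ι) (w : ι → κ → ℝ) (b u : κ) : ℝ := ∑ x ∈ X, w x b * w x u

theorem codegree_comm (X : Finset ι) (w : ι → κ → ℝ) (b u : κ) :
    codegree X w b u = codegree X w u b :=
  sum_congr rfl fun _ _ => mul_comm _ _

theorem exists_large_degree_few_weak_pairs (X : Finset ι) (V : Finset κ) (w : ι → κ → ℝ)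
    {θ : ℝ} (hX : X.Nonempty) (hθ : 0 ≤ θ)
    (hT : 24 * #V ^ 2 * #X * θ ≤ (∑ x ∈ X, ∑ b ∈ V, w x b) ^ 2) :
    ∃ x ∈ X, (∑ x ∈ X, ∑ b ∈ V, w x b) ^ 2 +
        24 * #X ^ 2 * ∑ p ∈ V ×ˢ V with codegree X w p.1 p.2 < θ, w x p.1 * w x p.2 ≤
      2 * #X ^ 2 * (∑ b ∈ V, w x b) ^ 2 := by
  set T := ∑ x ∈ X, ∑ b ∈ V, w x b
  set W := (V ×ˢ V).filter fun p => codegree X w p.1 p.2 < θ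
  have hCS : T ^ 2 ≤ #X * ∑ x ∈ X, (∑ b ∈ V, w x b) ^ 2 := sq_sum_le_card_mul_sum_sq
  have hweak : ∑ x ∈ X, ∑ p ∈ W, w x p.1 * w x p.2 ≤ #V ^ 2 * θ := by
    rw [sum_comm]
    calc ∑ p ∈ W, ∑ x ∈ X, w x p.1 * w x p.2 ≤ ∑ _p ∈ W, θ :=
          sum_le_sum fun p hp => (mem_filter.1 hp).2.le
      _ = #W * θ := by rw [sum_const, nsmul_eq_mul]
      _ ≤ #V ^ 2 * θ := by
          gcongr
          exact_mod_cast (card_filter_le _ _).trans (card_product V V ▸ (sq #V).ge)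
  apply exists_le_of_sum_le hX
  simp only [sum_add_distrib, sum_const, nsmul_eq_mul, ← mul_sum]
  nlinarith

theorem sum_le_sum_filter_add_sum_filter_add_mul_card (V : Finset κ) (φ : κ → ℝ) {M : ℝ}
    (p q : κ → Prop) [DecidablePred p] [DecidablePred q]
    (hφ₀ : ∀ u ∈ V, 0 ≤ φ u) (hφM : ∀ u ∈ V, φ u ≤ M) :
    ∑ u ∈ V, φ u ≤ ∑ u ∈ V with p u, φ u + ∑ u ∈ V with q u, φ u +
      M * #{u ∈ V | ¬p u ∧ ¬q u} := by
  have hpoint : ∀ u ∈ V, φ u ≤ (if p u then φ u else 0) + (if q u then φ u else 0)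
      + (if ¬p u ∧ ¬q u then M else 0) := by
    intro u hu
    have := hφ₀ u hu
    by_cases hp : p u <;> by_cases hq : q u <;> simp [hp, hq, this, hφM u hu]
  have hsum := sum_le_sum hpoint
  simp only [sum_add_distrib, ← sum_filter, sum_const, nsmul_eq_mul] at hsum
  linarith

theorem exists_large_subset_many_common_nonweak (V : Finset κ) (φ : κ → ℝ) (M : ℝ)
    (weak : κ → κ → Prop) [DecidableRel weak]
    (hφ₀ : ∀ b ∈ V, 0 ≤ φ b) (hφM : ∀ b ∈ V, φ b ≤ M)
    (hweak : 12 * ∑ p ∈ V ×ˢ V with weak p.1 p.2, φ p.1 * φ p.2 ≤ (∑ b ∈ V, φ b) ^ 2) :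
    ∃ B ⊆ V, 2 * ∑ b ∈ V, φ b ≤ 3 * M * #B ∧
      ∀ b ∈ B, ∀ b' ∈ B, ∑ b ∈ V, φ b ≤ 2 * M * #{u ∈ V | ¬weak b u ∧ ¬weak b' u} := by
  set P := ∑ b ∈ V, φ b
  set D : κ → ℝ := fun b => ∑ u ∈ V with weak b u, φ u
  have hD : ∑ b ∈ V, φ b * D b ≤ P ^ 2 / 12 := by
    have : ∑ p ∈ V ×ˢ V with weak p.1 p.2, φ p.1 * φ p.2 = ∑ b ∈ V, φ b * D b := by
      simp only [D, mul_sum, sum_filter, sum_product, mul_ite, mul_zero]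
    linarith
  have hD₀ : ∀ b ∈ V, 0 ≤ D b := fun b _ => sum_nonneg fun u hu => hφ₀ u (mem_filter.1 hu).1
  refine ⟨V.filter fun b => 4 * D b ≤ P, filter_subset _ _, ?_, ?_⟩
  · set B := V.filter fun b => 4 * D b ≤ P
    have hgood : ∑ b ∈ B, φ b ≤ M * #B := by
      simpa [mul_comm] using sum_le_card_nsmul B φ M fun b hb => hφM b (mem_filter.1 hb).1
    -- the vertices outside `B` carry at most a third of the mass `P`
    have hbad : (∑ b ∈ V with ¬(4 * D b ≤ P), φ b) * P ≤ P ^ 2 / 3 := by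
      calc (∑ b ∈ V with ¬(4 * D b ≤ P), φ b) * P
          ≤ ∑ b ∈ V with ¬(4 * D b ≤ P), 4 * (φ b * D b) := by
            rw [sum_mul]
            refine sum_le_sum fun b hb => ?_
            obtain ⟨hbV, hbD⟩ := mem_filter.1 hb
            nlinarith [hφ₀ b hbV]
        _ ≤ ∑ b ∈ V, 4 * (φ b * D b) :=
            sum_le_sum_of_subset_of_nonneg (filter_subset _ _) fun b hb _ =>
              by nlinarith [hφ₀ b hb, hD₀ b hb]
        _ ≤ P ^ 2 / 3 := by rw [← mul_sum]; linarith
    have hsplit := sum_filter_add_sum_filter_not V (fun b => 4 * D b ≤ P) φ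
    have hB₀ : 0 ≤ ∑ b ∈ B, φ b := sum_nonneg fun b hb => hφ₀ b (mem_filter.1 hb).1
    have hbad₀ : 0 ≤ ∑ b ∈ V with ¬(4 * D b ≤ P), φ b :=
      sum_nonneg fun b hb => hφ₀ b (mem_filter.1 hb).1
    nlinarith
  · intro b hb b' hb'
    have := sum_le_sum_filter_add_sum_filter_add_mul_card V φ (weak b) (weak b') hφ₀ hφM
    have := (mem_filter.1 hb).2
    have := (mem_filter.1 hb').2
    linarith

theorem exists_large_subset_many_common_high_codegree (X : Finset ι) (V : Finset κ)
    (w : ι → κ → ℝ) {M θ : ℝ} (hX : X.Nonempty) (hw₀ : ∀ x ∈ X, ∀ b ∈ V, 0 ≤ w x b)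
    (hwM : ∀ x ∈ X, ∀ b ∈ V, w x b ≤ M) (hθ : 0 ≤ θ)
    (hT : 24 * #V ^ 2 * #X * θ ≤ (∑ x ∈ X, ∑ b ∈ V, w x b) ^ 2) :
    ∃ B ⊆ V, ∃ P : ℝ, 0 ≤ P ∧ (∑ x ∈ X, ∑ b ∈ V, w x b) ^ 2 ≤ 2 * #X ^ 2 * P ^ 2 ∧
      2 * P ≤ 3 * M * #B ∧ ∀ b ∈ B, ∀ b' ∈ B,
        P ≤ 2 * M * #{u ∈ V | θ ≤ codegree X w b u ∧ θ ≤ codegree X w b' u} := by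
  obtain ⟨x, hx, hxT⟩ := exists_large_degree_few_weak_pairs X V w hX hθ hT
  have hW₀ : 0 ≤ ∑ p ∈ V ×ˢ V with codegree X w p.1 p.2 < θ, w x p.1 * w x p.2 :=
    sum_nonneg fun p hp => by
      obtain ⟨hp₁, hp₂⟩ := mem_product.1 (mem_filter.1 hp).1
      exact mul_nonneg (hw₀ x hx _ hp₁) (hw₀ x hx _ hp₂)
  have hweak : 12 * ∑ p ∈ V ×ˢ V with codegree X w p.1 p.2 < θ, w x p.1 * w x p.2 ≤
      (∑ b ∈ V, w x b) ^ 2 := by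
    refine le_of_mul_le_mul_left ?_ (by positivity : (0 : ℝ) < 2 * #X ^ 2)
    nlinarith [sq_nonneg (∑ x ∈ X, ∑ b ∈ V, w x b)]
  obtain ⟨B, hBV, hB, hS⟩ := exists_large_subset_many_common_nonweak V (w x) M
    (fun b u => codegree X w b u < θ) (hw₀ x hx) (hwM x hx) hweak
  refine ⟨B, hBV, _, sum_nonneg (hw₀ x hx), by nlinarith, hB, fun b hb b' hb' => ?_⟩
  simpa only [not_lt] using hS b hb b' hb'

end WeightedBipartite

section Group

def fiberCard {α β : Type*} [DecidableEq β] (s : Finset α) (f : α → β) (y : β) : ℕ :=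
  #{t ∈ s | f t = y}

theorem sum_fiberCard_le_card {α β : Type*} [DecidableEq β] (s : Finset α) (f : α → β)
    (Y : Finset β) : ∑ y ∈ Y, fiberCard s f y ≤ #s := by
  simp only [fiberCard]
  rw [sum_card_fiberwise_eq_card_filter]
  exact card_filter_le _ _

variable {G : Type*} [Group G] [DecidableEq G]

theorem sum_fiberCard_mul_fiberCard_le {α β : Type*} (s : Finset α) (t : Finset β)
    (f : α → G) (g : β → G) (S : Finset G) (b c : G) :
    ∑ u ∈ S, fiberCard s f (b * u⁻¹) * fiberCard t g (u * c) ≤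
      fiberCard (s ×ˢ t) (fun p => f p.1 * g p.2) (b * c) := by
  simp only [fiberCard, ← card_product, ← card_sigma]
  refine card_le_card_of_injOn (fun p => p.2) ?_ ?_
  · rintro ⟨u, x, y⟩ h
    simp only [coe_sigma, Set.mem_sigma_iff, mem_coe, mem_product, mem_filter] at h
    simp only [mem_coe, mem_filter, mem_product]
    obtain ⟨-, ⟨hx, hfx⟩, hy, hgy⟩ := h
    exact ⟨⟨hx, hy⟩, by rw [hfx, hgy]; group⟩
  · rintro ⟨u, x, y⟩ h ⟨u', x', y'⟩ h' (hxy : (x, y) = (x', y'))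
    simp only [coe_sigma, Set.mem_sigma_iff, mem_coe, mem_product, mem_filter] at h h'
    obtain ⟨rfl, rfl⟩ := Prod.mk.inj hxy
    obtain rfl : u = u' := by simpa using h.2.1.2.symm.trans h'.2.1.2
    rfl

def quotWord (p : G × G) : G := p.1⁻¹ * p.2

def quotCount (A : Finset G) : G → ℕ := fiberCard (A ×ˢ A) quotWord

def quotCount₂ (A : Finset G) : G → ℕ :=
  fiberCard ((A ×ˢ A) ×ˢ (A ×ˢ A)) fun p => quotWord p.1 * quotWord p.2

def quotCount₄ (A : Finset G) : G → ℕ :=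
  fiberCard (((A ×ˢ A) ×ˢ (A ×ˢ A)) ×ˢ ((A ×ˢ A) ×ˢ (A ×ˢ A)))
    fun p => quotWord p.1.1 * quotWord p.1.2 * (quotWord p.2.1 * quotWord p.2.2)

theorem quotCount_inv (A : Finset G) (y : G) : quotCount A y⁻¹ = quotCount A y := by
  refine card_nbij' Prod.swap Prod.swap ?_ ?_ (fun _ _ => rfl) (fun _ _ => rfl) <;>
  · rintro ⟨a, a'⟩ h
    simp only [mem_coe, mem_filter, mem_product, Prod.swap_prod_mk] at h ⊢
    simp only [quotWord] at h ⊢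
    exact ⟨h.1.symm, by simpa using congrArg (·⁻¹) h.2⟩

theorem quotCount_le_card (A : Finset G) (y : G) : quotCount A y ≤ #A := by
  refine card_le_card_of_injOn Prod.fst (fun p hp => (mem_product.1 (mem_filter.1 hp).1).1) ?_
  rintro ⟨a, a'⟩ h ⟨c, c'⟩ h' (rfl : a = c)
  simp only [mem_coe, mem_filter, mem_product] at h h'
  simp only [quotWord] at h h'
  exact Prod.ext rfl (mul_left_cancel (h.2.trans h'.2.symm))

theorem sum_sum_quotCount_eq_card (A : Finset G) :
    ∑ x ∈ A, ∑ b ∈ A, quotCount A (b * x⁻¹) =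
      #((A ×ˢ A ×ˢ A ×ˢ A).filter
        fun q : G × G × G × G => q.1 * q.2.2.1 = q.2.1 * q.2.2.2) := by
  simp only [quotCount, fiberCard, ← card_sigma]
  refine card_nbij' (fun p => (p.2.2.1, p.2.2.2, p.2.1, p.1))
    (fun q => ⟨q.2.2.2, q.2.2.1, q.1, q.2.1⟩) ?_ ?_ (fun _ _ => rfl) (fun _ _ => rfl)
  · rintro ⟨x, b, a, a'⟩ h
    simp only [coe_sigma, Set.mem_sigma_iff, mem_coe, mem_product, mem_filter] at h ⊢
    simp only [quotWord] at h ⊢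
    obtain ⟨hx, hb, ⟨ha, ha'⟩, h⟩ := h
    refine ⟨⟨ha, ha', hb, hx⟩, ?_⟩
    rw [show a' = a * (b * x⁻¹) by rw [← h]; group]
    group
  · rintro ⟨a, a', b, x⟩ h
    simp only [coe_sigma, Set.mem_sigma_iff, mem_coe, mem_product, mem_filter] at h ⊢
    simp only [quotWord] at h ⊢
    obtain ⟨⟨ha, ha', hb, hx⟩, h⟩ := h
    refine ⟨hx, hb, ⟨ha, ha'⟩, ?_⟩
    rw [show a' = a * b * x⁻¹ by rw [h]; group]
    group

def quotWeight (A : Finset G) (x b : G) : ℝ := quotCount A (b * x⁻¹)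

theorem codegree_quotWeight_le (A : Finset G) (b u : G) :
    codegree A (quotWeight A) b u ≤ quotCount₂ A (b * u⁻¹) := by
  have : codegree A (quotWeight A) b u =
      ((∑ x ∈ A, quotCount A (b * x⁻¹) * quotCount A (x * u⁻¹) : ℕ) : ℝ) := by
    push_cast
    refine sum_congr rfl fun x _ => ?_
    rw [quotWeight, quotWeight, ← quotCount_inv A (x * u⁻¹), mul_inv_rev, inv_inv]
  rw [this]
  exact_mod_cast sum_fiberCard_mul_fiberCard_le _ _ _ _ A b u⁻¹

theorem sq_mul_card_common_le_quotCount₄ (A : Finset G) {θ : ℝ} (hθ : 0 ≤ θ) (b b' : G) :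
    θ ^ 2 * #{u ∈ A | θ ≤ codegree A (quotWeight A) b u ∧ θ ≤ codegree A (quotWeight A) b' u}
      ≤ quotCount₄ A (b * b'⁻¹) := by
  set S := A.filter fun u => θ ≤ codegree A (quotWeight A) b u ∧
    θ ≤ codegree A (quotWeight A) b' u
  calc θ ^ 2 * #S = ∑ _u ∈ S, θ * θ := by rw [sum_const, nsmul_eq_mul, sq, mul_comm]
    _ ≤ ∑ u ∈ S, (quotCount₂ A (b * u⁻¹) : ℝ) * quotCount₂ A (u * b'⁻¹) := by
        refine sum_le_sum fun u hu => ?_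
        obtain ⟨-, hbu, hb'u⟩ := mem_filter.1 hu
        rw [codegree_comm] at hb'u
        exact mul_le_mul (hbu.trans (codegree_quotWeight_le A b u))
          (hb'u.trans (codegree_quotWeight_le A u b')) hθ (Nat.cast_nonneg _)
    _ ≤ quotCount₄ A (b * b'⁻¹) := by
        exact_mod_cast sum_fiberCard_mul_fiberCard_le _ _ _ _ S b b'⁻¹

theorem card_mul_inv_mul_le (A B : Finset G) {c : ℝ}
    (h : ∀ b ∈ B, ∀ b' ∈ B, c ≤ quotCount₄ A (b * b'⁻¹)) : #(B * B⁻¹) * c ≤ #A ^ 8 := by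
  have hmem : ∀ z ∈ B * B⁻¹, c ≤ quotCount₄ A z := by
    intro z hz
    obtain ⟨b, hb, y, hy, rfl⟩ := mem_mul.1 hz
    obtain ⟨b', hb', rfl⟩ := mem_inv.1 hy
    exact h b hb b' hb'
  calc #(B * B⁻¹) * c ≤ ∑ z ∈ B * B⁻¹, (quotCount₄ A z : ℝ) := by
        simpa using card_nsmul_le_sum _ _ c hmem
    _ ≤ (#(((A ×ˢ A) ×ˢ (A ×ˢ A)) ×ˢ ((A ×ˢ A) ×ˢ (A ×ˢ A))) : ℝ) := by
        exact_mod_cast sum_fiberCard_le_card _ _ _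
    _ = #A ^ 8 := by simp only [card_product]; push_cast; ring

end Group

theorem card_bounds_of_estimates {n α T P b d : ℝ} (hn : 0 < n) (hα : 0 < α) (hT : n ^ 3 ≤ α * T)
    (hP : 0 ≤ P) (hTP : T ^ 2 ≤ 2 * n ^ 2 * P ^ 2) (hb : 2 * P ≤ 3 * n * b)
    (hd : d * ((T ^ 2 / (24 * n ^ 3)) ^ 2 * (P / (2 * n))) ≤ n ^ 8) :
    n / (4 * α) ≤ b ∧ d ≤ 2 ^ 14 * α ^ 6 * b := by
  have hT₀ : 0 < T := pos_of_mul_pos_right ((by positivity : (0 : ℝ) < n ^ 3).trans_le hT) hα.le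
  have hP₀ : 0 < P := by
    rcases hP.eq_or_lt with rfl | h
    · nlinarith [pow_pos hT₀ 2]
    · exact h
  have hT6 : n ^ 6 ≤ α ^ 2 * T ^ 2 := by
    simpa [← pow_mul, mul_pow] using pow_le_pow_left₀ (by positivity) hT 2
  constructor
  · have h4 : n ^ 4 ≤ 2 * α ^ 2 * P ^ 2 := by
      have : n ^ 2 * n ^ 4 ≤ n ^ 2 * (2 * α ^ 2 * P ^ 2) := by nlinarith
      exact le_of_mul_le_mul_left this (by positivity)
    have h2 : 3 * n ^ 2 ≤ 8 * α * P := by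
      refine (pow_le_pow_iff_left₀ (by positivity) (by positivity) two_ne_zero).1 ?_
      nlinarith
    rw [div_le_iff₀ (by positivity)]
    nlinarith
  · have hd' : d * (T ^ 4 * P) ≤ 1152 * n ^ 15 := by
      field_simp at hd
      linarith
    have key : 1152 * n ^ 15 ≤ 2 ^ 14 * α ^ 6 * b * (T ^ 4 * P) := by
      refine le_of_mul_le_mul_right ?_ (by positivity : (0 : ℝ) < n ^ 3)
      calc 1152 * n ^ 15 * n ^ 3 = 1152 * (n ^ 6) ^ 3 := by ring
        _ ≤ 1152 * (α ^ 2 * T ^ 2) ^ 3 := by gcongr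
        _ = 1152 * α ^ 6 * T ^ 4 * T ^ 2 := by ring
        _ ≤ 1152 * α ^ 6 * T ^ 4 * (2 * n ^ 2 * P ^ 2) := by gcongr
        _ = 1152 * α ^ 6 * T ^ 4 * n ^ 2 * P * (2 * P) := by ring
        _ ≤ 1152 * α ^ 6 * T ^ 4 * n ^ 2 * P * (3 * n * b) := by gcongr
        _ ≤ 2 ^ 14 * α ^ 6 * b * (T ^ 4 * P) * n ^ 3 := by
            have : 0 ≤ α ^ 6 * T ^ 4 * n ^ 3 * P * b := by
              have : 0 ≤ b := by nlinarith
              positivity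
            nlinarith
    exact le_of_mul_le_mul_right (hd'.trans key) (by positivity)

end BalogSzemerediGowers

open BalogSzemerediGowers in
/-- Balog–Szemerédi–Gowers theorem (Schoen's version): if `A` is a nonempty finite subset
of a group `G` and `α ≥ 1` is such that the multiplicative energy
`E(A,A) = #{(a₁,a₂,b₁,b₂) ∈ A⁴ : a₁b₁ = a₂b₂}` satisfies `E(A,A) ≥ |A|³/α`, then there is
a subset `B ⊆ A` with `|B| ≥ |A|/(4α)` and `|B·B⁻¹| ≤ 2¹⁴·α⁶·|B|`. -/
theorem balog_szemeredi_gowers_schoen {G : Type*} [Group G] [DecidableEq G]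
    (A : Finset G) (hA : A.Nonempty) (α : ℝ) (hα : 1 ≤ α)
    (hE : (A.card : ℝ) ^ 3 / α ≤
      (((A ×ˢ A ×ˢ A ×ˢ A).filter
        fun q : G × G × G × G => q.1 * q.2.2.1 = q.2.1 * q.2.2.2).card : ℝ)) :
    ∃ B ⊆ A, (A.card : ℝ) / (4 * α) ≤ (B.card : ℝ) ∧
      ((B * B⁻¹).card : ℝ) ≤ 2 ^ 14 * α ^ 6 * (B.card : ℝ) := by
  set n : ℝ := (#A : ℝ)
  set T := ∑ x ∈ A, ∑ b ∈ A, quotWeight A x b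
  have hn : 0 < n := Nat.cast_pos.2 hA.card_pos
  have hα₀ : 0 < α := one_pos.trans_le hα
  have hnT : n ^ 3 ≤ α * T := by
    have hT : T = #((A ×ˢ A ×ˢ A ×ˢ A).filter
        fun q : G × G × G × G => q.1 * q.2.2.1 = q.2.1 * q.2.2.2) := by
      simp only [T, quotWeight]
      exact_mod_cast sum_sum_quotCount_eq_card A
    rw [hT]
    exact (div_le_iff₀' hα₀).1 hE
  set θ := T ^ 2 / (24 * n ^ 3)
  have hθ : 0 ≤ θ := by positivity
  obtain ⟨B, hBA, P, hP, hTP, hPB, hS⟩ := exists_large_subset_many_common_high_codegree A A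
    (quotWeight A) (M := n) hA (fun _ _ _ _ => Nat.cast_nonneg _)
    (fun _ _ _ _ => by simpa only [quotWeight, n] using Nat.cast_le.2 (quotCount_le_card A _)) hθ
    (le_of_eq (by simp only [θ, n, T]; field_simp))
  refine ⟨B, hBA, card_bounds_of_estimates hn hα₀ hnT hP hTP hPB (card_mul_inv_mul_le A B fun b hb b' hb' => ?_)⟩
  calc θ ^ 2 * (P / (2 * n)) ≤ θ ^ 2 * #{u ∈ A | θ ≤ codegree A (quotWeight A) b u ∧
        θ ≤ codegree A (quotWeight A) b' u} := by
        gcongr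
        rw [div_le_iff₀ (by positivity)]
        linarith [hS b hb b' hb']
    _ ≤ (quotCount₄ A (b * b'⁻¹) : ℝ) := sq_mul_card_common_le_quotCount₄ A hθ b b'
end

section
/- Let G be a group, let A ⊆ G be a nonempty finite subset, and let α ≥ 1 be a real number such that the multiplicative energy satisfies E(A,A) ≥ |A|³/α. Fix a real δ with 0 < δ < 1, and let r be the representation function of A·A⁻¹, i.e. r(x) = #{(a,b) ∈ A×A : ab⁻¹ = x}. Then there exists x ∈ G such that |A ∩ A·x| ≥ |A|/(2α) and #{(a,b) ∈ (A ∩ A·x)² : r(ab⁻¹) ≥ δ|A|/(2α²)} ≥ (1−δ)·|A ∩ A·x|². -/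
/-!
Write `A_x = A ∩ A·x`. Sorting the solutions of `a₁b₁ = a₂b₂` by `(b₂, b₁)` gives
`E(A,A) = ∑_{(u,v) ∈ A²} |A_{uv⁻¹}|`, so these `|A|²` numbers have mean at least `|A|/α` and, by
Cauchy–Schwarz, mean square at least `|A|²/α²`. Translating a pair `(a,b) ∈ A_x²` to
`(ax⁻¹, bx⁻¹) ∈ A²` keeps its ratio, and double counting shows that the pairs with
`r(ab⁻¹) < k := δ|A|/(2α²)` number at most `|A|³k` in total over all `(u,v)`, which is half of
the lower bound for `δ ∑ |A_{uv⁻¹}|²`. So some `x = uv⁻¹` has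
`δ|A_x|² > δ(|A|/(2α))² + #{unpopular pairs in A_x²}`, which gives both conclusions.
-/

open Finset
open scoped Pointwise

lemma exists_half_mean_le_and_le_mul_sq {ι : Type*} {s : Finset ι} {h b : ι → ℝ} {μ δ : ℝ}
    (hs : s.Nonempty) (hμ : 0 < μ) (hδ : 0 < δ) (hh : ∀ i ∈ s, 0 ≤ h i)
    (hb : ∀ i ∈ s, 0 ≤ b i) (hmean : #s * μ ≤ ∑ i ∈ s, h i)
    (hbad : ∑ i ∈ s, b i ≤ δ * #s * μ ^ 2 / 2) :
    ∃ i ∈ s, μ / 2 ≤ h i ∧ b i ≤ δ * h i ^ 2 := by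
  have hm : (0 : ℝ) < #s := Nat.cast_pos.2 hs.card_pos
  have hsq : #s * μ ^ 2 ≤ ∑ i ∈ s, h i ^ 2 := by
    have hcs := sq_sum_le_card_mul_sum_sq (s := s) (f := h)
    have := pow_le_pow_left₀ (by positivity) hmean 2
    nlinarith
  have hlt : ∑ i ∈ s, (δ * (μ / 2) ^ 2 + b i) < ∑ i ∈ s, δ * h i ^ 2 := by
    rw [sum_add_distrib, sum_const, nsmul_eq_mul, ← mul_sum]
    nlinarith [mul_pos (mul_pos hm hδ) (pow_pos hμ 2)]
  obtain ⟨i, hi, hlt⟩ := exists_lt_of_sum_lt hlt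
  have hc : 0 ≤ δ * (μ / 2) ^ 2 := by positivity
  refine ⟨i, hi, ?_, by linarith⟩
  have : (μ / 2) ^ 2 ≤ h i ^ 2 := le_of_mul_le_mul_left (by linarith [hb i hi]) hδ
  exact (pow_le_pow_iff_left₀ (by positivity) (hh i hi) two_ne_zero).1 this

section Translates

variable {G : Type*} [Group G] [DecidableEq G]

lemma card_mul_eq_mul_eq_sum_card_inter_image_mul (A : Finset G) :
    #{q ∈ A ×ˢ A ×ˢ A ×ˢ A | q.1 * q.2.2.1 = q.2.1 * q.2.2.2}
      = ∑ p ∈ A ×ˢ A, #(A ∩ A.image (· * (p.1 * p.2⁻¹))) := by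
  rw [card_eq_sum_card_fiberwise (f := fun q => (q.2.2.2, q.2.2.1)) (t := A ×ˢ A)
    (by intro q hq; simp_all)]
  refine sum_congr rfl fun p hp => card_nbij' (·.1) (fun a => (a, a * p.2 * p.1⁻¹, p.2, p.1))
    ?_ ?_ ?_ ?_
  · rintro ⟨a, b, c, d⟩ hq
    simp only [mem_coe, mem_filter, mem_product, Prod.ext_iff] at hq
    obtain ⟨⟨⟨ha, hb, -, -⟩, h⟩, rfl, rfl⟩ := hq
    exact mem_inter.2 ⟨ha, mem_image.2 ⟨b, hb, by rw [← mul_assoc, ← h, mul_inv_cancel_right]⟩⟩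
  · rw [mem_product] at hp
    intro a
    simp +contextual [Prod.ext_iff, hp, mul_assoc]
  · rintro ⟨a, b, c, d⟩ hq
    simp only [mem_coe, mem_filter, mem_product, Prod.ext_iff] at hq
    obtain ⟨⟨-, h⟩, rfl, rfl⟩ := hq
    simp [h]
  · intro a
    simp

lemma card_filter_inter_image_mul_sq (A : Finset G) (x : G) (P : G → Prop) [DecidablePred P] :
    #{q ∈ (A ∩ A.image (· * x)) ×ˢ (A ∩ A.image (· * x)) | P (q.1 * q.2⁻¹)}
      = #{q ∈ A ×ˢ A | P (q.1 * q.2⁻¹) ∧ q.1 * x ∈ A ∧ q.2 * x ∈ A} :=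
  card_nbij' (fun q => (q.1 * x⁻¹, q.2 * x⁻¹)) (fun q => (q.1 * x, q.2 * x))
    (by intro q; simp +contextual [mul_assoc])
    (by intro q; simp +contextual [mul_assoc])
    (by intro q; simp)
    (by intro q; simp)

lemma card_filter_mul_mem_and_mul_mem_le (A : Finset G) (c d : G) :
    #{p ∈ A ×ˢ A | c * (p.1 * p.2⁻¹) ∈ A ∧ d * (p.1 * p.2⁻¹) ∈ A}
      ≤ #A * A.convolution A⁻¹ (c * d⁻¹) := by
  rw [← card_mul_inv_eq_convolution_inv, ← card_product]
  -- `p` is recovered from `p.2` and `c * (p.1 * p.2⁻¹)`.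
  refine card_le_card_of_injOn (fun p => (p.2, c * (p.1 * p.2⁻¹), d * (p.1 * p.2⁻¹))) ?_ ?_
  · intro p
    simp +contextual [mul_assoc]
  · rintro ⟨a, b⟩ - ⟨a', b'⟩ - h
    simp only [Prod.mk.injEq, mul_right_inj] at h
    obtain ⟨rfl, h, -⟩ := h
    simpa using h

lemma sum_card_filter_inter_image_mul_sq_le (A : Finset G) (P : G → Prop) [DecidablePred P] :
    ∑ p ∈ A ×ˢ A,
        #{q ∈ (A ∩ A.image (· * (p.1 * p.2⁻¹))) ×ˢ (A ∩ A.image (· * (p.1 * p.2⁻¹))) |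
          P (q.1 * q.2⁻¹)}
      ≤ ∑ q ∈ A ×ˢ A with P (q.1 * q.2⁻¹), #A * A.convolution A⁻¹ (q.1 * q.2⁻¹) := by
  calc _ = ∑ p ∈ A ×ˢ A, #{q ∈ {q ∈ A ×ˢ A | P (q.1 * q.2⁻¹)} |
          q.1 * (p.1 * p.2⁻¹) ∈ A ∧ q.2 * (p.1 * p.2⁻¹) ∈ A} := by
        simp only [card_filter_inter_image_mul_sq, filter_filter]
    _ = ∑ q ∈ A ×ˢ A with P (q.1 * q.2⁻¹), #{p ∈ A ×ˢ A |
          q.1 * (p.1 * p.2⁻¹) ∈ A ∧ q.2 * (p.1 * p.2⁻¹) ∈ A} :=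
        sum_card_bipartiteAbove_eq_sum_card_bipartiteBelow _
    _ ≤ _ := sum_le_sum fun q _ => card_filter_mul_mem_and_mul_mem_le A q.1 q.2

lemma sum_card_filter_inter_image_mul_sq_convolution_lt_le (A : Finset G) {k : ℝ} (hk : 0 ≤ k) :
    ∑ p ∈ A ×ˢ A,
        (#{q ∈ (A ∩ A.image (· * (p.1 * p.2⁻¹))) ×ˢ (A ∩ A.image (· * (p.1 * p.2⁻¹))) |
          (A.convolution A⁻¹ (q.1 * q.2⁻¹) : ℝ) < k} : ℝ)
      ≤ #A ^ 3 * k := by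
  calc _ ≤ ∑ q ∈ A ×ˢ A with (A.convolution A⁻¹ (q.1 * q.2⁻¹) : ℝ) < k,
          (#A * A.convolution A⁻¹ (q.1 * q.2⁻¹) : ℝ) := by
        have h := sum_card_filter_inter_image_mul_sq_le A fun y => (A.convolution A⁻¹ y : ℝ) < k
        simpa only [Nat.cast_sum, Nat.cast_mul] using Nat.cast_le (α := ℝ) |>.2 h
    _ ≤ ∑ q ∈ A ×ˢ A with (A.convolution A⁻¹ (q.1 * q.2⁻¹) : ℝ) < k, (#A * k : ℝ) :=
        sum_le_sum fun q hq => by gcongr; exact (mem_filter.1 hq).2.le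
    _ ≤ ∑ q ∈ A ×ˢ A, (#A * k : ℝ) :=
        sum_le_sum_of_subset_of_nonneg (filter_subset _ _) fun _ _ _ => by positivity
    _ = #A ^ 3 * k := by simp only [sum_const, card_product, nsmul_eq_mul]; push_cast; ring

end Translates

open scoped Classical in
theorem exists_translate_with_popular_differences_general {G : Type*} [Group G] [DecidableEq G]
    (A : Finset G) (hA : A.Nonempty) (α : ℝ) (hα : 1 ≤ α)
    (hE : (A.card : ℝ) ^ 3 / α ≤
      (((A ×ˢ A ×ˢ A ×ˢ A).filter
        fun q : G × G × G × G => q.1 * q.2.2.1 = q.2.1 * q.2.2.2).card : ℝ))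
    (δ : ℝ) (hδ0 : 0 < δ) (r : G → ℕ)
    (hr : ∀ x : G, r x = ((A ×ˢ A).filter fun q : G × G => q.1 * q.2⁻¹ = x).card) :
    ∃ x : G,
      (A.card : ℝ) / (2 * α) ≤ ((A ∩ A.image (· * x)).card : ℝ) ∧
      (1 - δ) * ((A ∩ A.image (· * x)).card : ℝ) ^ 2 ≤
        (((((A ∩ A.image (· * x))) ×ˢ (A ∩ A.image (· * x))).filter
          fun q : G × G => δ * (A.card : ℝ) / (2 * α ^ 2) ≤ (r (q.1 * q.2⁻¹) : ℝ)).card : ℝ) := by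
  obtain rfl : r = A.convolution A⁻¹ :=
    funext fun x => (hr x).trans (card_mul_inv_eq_convolution_inv A A x)
  set n := (#A : ℝ)
  set k := δ * n / (2 * α ^ 2)
  have hn : 0 < n := Nat.cast_pos.2 hA.card_pos
  have hα0 : 0 < α := by linarith
  have hmean : #(A ×ˢ A) * (n / α) ≤ ∑ p ∈ A ×ˢ A, (#(A ∩ A.image (· * (p.1 * p.2⁻¹))) : ℝ) := by
    calc _ = n ^ 3 / α := by simp only [card_product]; push_cast; ring
      _ ≤ _ := hE
      _ = _ := by rw [card_mul_eq_mul_eq_sum_card_inter_image_mul]; push_cast; rfl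
  have hbad : ∑ p ∈ A ×ˢ A,
      (#{q ∈ (A ∩ A.image (· * (p.1 * p.2⁻¹))) ×ˢ (A ∩ A.image (· * (p.1 * p.2⁻¹))) |
        (A.convolution A⁻¹ (q.1 * q.2⁻¹) : ℝ) < k} : ℝ) ≤ δ * #(A ×ˢ A) * (n / α) ^ 2 / 2 := by
    calc _ ≤ n ^ 3 * k := sum_card_filter_inter_image_mul_sq_convolution_lt_le A (by positivity)
      _ = _ := by simp only [k, n, card_product, Nat.cast_mul]; field_simp
  obtain ⟨p, -, hlarge, hfew⟩ := exists_half_mean_le_and_le_mul_sq (hA.product hA)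
    (by positivity) hδ0 (fun _ _ => by positivity) (fun _ _ => by positivity) hmean hbad
  refine ⟨p.1 * p.2⁻¹, by simpa only [div_div, mul_comm α] using hlarge, ?_⟩
  have hsplit := card_filter_add_card_filter_not (s := (A ∩ A.image (· * (p.1 * p.2⁻¹))) ×ˢ
    (A ∩ A.image (· * (p.1 * p.2⁻¹)))) (fun q => k ≤ (A.convolution A⁻¹ (q.1 * q.2⁻¹) : ℝ))
  simp only [not_le, card_product] at hsplit
  have := congrArg (Nat.cast (R := ℝ)) hsplit
  push_cast at this
  linarith

open scoped Classical in
/-- Key step towards the Balog–Szemerédi–Gowers theorem: if `A` is a nonempty finite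
subset of a group `G` with multiplicative energy `E(A,A) ≥ |A|³/α` and `0 < δ < 1`, then
there is `x ∈ G` with `|A ∩ A·x| ≥ |A|/(2α)` such that at least `(1-δ)|A ∩ A·x|²` pairs
`(a,b) ∈ (A ∩ A·x)²` satisfy `r(ab⁻¹) ≥ δ|A|/(2α²)`, where `r` is the representation
function of `A·A⁻¹`. -/
theorem exists_translate_with_popular_differences {G : Type*} [Group G] [DecidableEq G]
    (A : Finset G) (hA : A.Nonempty) (α : ℝ) (hα : 1 ≤ α)
    (hE : (A.card : ℝ) ^ 3 / α ≤
      (((A ×ˢ A ×ˢ A ×ˢ A).filter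
        fun q : G × G × G × G => q.1 * q.2.2.1 = q.2.1 * q.2.2.2).card : ℝ))
    (δ : ℝ) (hδ0 : 0 < δ) (hδ1 : δ < 1) (r : G → ℕ)
    (hr : ∀ x : G, r x = ((A ×ˢ A).filter fun q : G × G => q.1 * q.2⁻¹ = x).card) :
    ∃ x : G,
      (A.card : ℝ) / (2 * α) ≤ ((A ∩ A.image (· * x)).card : ℝ) ∧
      (1 - δ) * ((A ∩ A.image (· * x)).card : ℝ) ^ 2 ≤
        (((((A ∩ A.image (· * x))) ×ˢ (A ∩ A.image (· * x))).filter
          fun q : G × G => δ * (A.card : ℝ) / (2 * α ^ 2) ≤ (r (q.1 * q.2⁻¹) : ℝ)).card : ℝ) :=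
  exists_translate_with_popular_differences_general A hA α hα hE δ hδ0 r hr
end

section
/- Let G be a finite group, let A ⊆ G be a nonempty subset, and let ρ: G → ℝ be a probability density on G (ρ ≥ 0 and ∑_{x∈G} ρ(x) = 1). Let r(x) = #{(a,b) ∈ A×A : ab⁻¹ = x} be the representation function of A·A⁻¹, and set S = ∑_{x∈G} ρ(x)². Suppose β ≥ 1 is a real number such that ∑_{x∈G} r(x)ρ(x) ≥ |A|/β. Then ∑_{x∈G} r(x)² ≥ |A|²/(4β⁴·S). -/
/-- Lower bound on the multiplicative energy from random popular differences: if `ρ` is a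
probability density on a finite group `G`, `A ⊆ G` nonempty with representation function
`r` for `A·A⁻¹`, `S = ∑_x ρ(x)²`, and `∑_x r(x)ρ(x) ≥ |A|/β` with `β ≥ 1`, then
`∑_x r(x)² ≥ |A|²/(4β⁴S)`. -/
theorem energy_lower_bound_of_random_var {G : Type*} [Group G] [Fintype G] [DecidableEq G]
    (A : Finset G) (hA : A.Nonempty) (ρ : G → ℝ) (hρ0 : ∀ x, 0 ≤ ρ x)
    (hρ1 : ∑ x, ρ x = 1) (r : G → ℕ)
    (hr : ∀ x : G, r x = ((A ×ˢ A).filter fun q : G × G => q.1 * q.2⁻¹ = x).card)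
    (S : ℝ) (hS : S = ∑ x, ρ x ^ 2) (β : ℝ) (hβ : 1 ≤ β)
    (hexp : (A.card : ℝ) / β ≤ ∑ x, (r x : ℝ) * ρ x) :
    (A.card : ℝ) ^ 2 / (4 * β ^ 4 * S) ≤ ∑ x, (r x : ℝ) ^ 2 := by
  have hβ0 : (0:ℝ) < β := lt_of_lt_of_le one_pos hβ
  obtain ⟨x₀, hx₀⟩ : ∃ x, 0 < ρ x := by
    by_contra h
    push_neg at h
    have h0 : ∑ x, ρ x = 0 :=
      Finset.sum_eq_zero fun x _ => le_antisymm (h x) (hρ0 x)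
    rw [hρ1] at h0
    norm_num at h0
  have hSpos : 0 < S := by
    rw [hS]
    exact Finset.sum_pos' (fun x _ => sq_nonneg _)
      ⟨x₀, Finset.mem_univ _, by positivity⟩
  have hCS := Finset.sum_mul_sq_le_sq_mul_sq Finset.univ (fun x => (r x : ℝ)) ρ
  have h1 : ((A.card : ℝ) / β) ^ 2 ≤ (∑ x, (r x : ℝ) ^ 2) * S := by
    rw [hS]
    calc ((A.card : ℝ) / β) ^ 2 ≤ (∑ x, (r x : ℝ) * ρ x) ^ 2 := by
          apply pow_le_pow_left₀ (by positivity) hexp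
      _ ≤ _ := hCS
  have hR : 0 ≤ ∑ x, (r x : ℝ) ^ 2 := Finset.sum_nonneg fun x _ => sq_nonneg _
  rw [div_pow] at h1
  rw [div_le_iff₀ (by positivity)] at h1
  rw [div_le_iff₀ (by positivity)]
  nlinarith [mul_nonneg hR hSpos.le, sq_nonneg (β - 1), sq_nonneg β,
    mul_nonneg (mul_nonneg hR hSpos.le) (sq_nonneg β)]
end

section
/- Let G be a finite group and let ρ: G → ℝ be a probability density on G (ρ ≥ 0 and ∑_{x∈G} ρ(x) = 1). Define ρ_Y(y) = ∑_{x∈G} ρ(x)ρ(y⁻¹x) for y ∈ G, and set S = ρ_Y(e) = ∑_{x∈G} ρ(x)², where e is the identity of G. Let α ≥ 1 and define A = {x ∈ G : ρ_Y(x) ≥ S/α}. Let B ⊆ A be a subset and β > 0 a real number with |B| ≥ 1/(β·S). Then ∑_{x∈G} r_B(x)² ≥ |B|³/(4α⁹β⁴), where r_B(x) = #{(a,b) ∈ B×B : ab⁻¹ = x}. -/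
/-!
Write `S = ∑ ρ² = ρ_Y(e)`, `E(B) = ∑ r_B²` and `T = ∑_{a,b ∈ B} ρ_Y(ab⁻¹)`. Cauchy–Schwarz in the
variable `X₂` gives `(∑_{x ∈ B} ρ_Y(x))² ≤ S·T`; grouping `T` by the value of `ab⁻¹` and applying
Cauchy–Schwarz again gives `T² ≤ E(B)·∑ ρ_Y² ≤ E(B)·S`, because `ρ_Y ≤ S` pointwise and `ρ_Y` sums
to `1`. Since `ρ_Y ≥ S/α` on `B`, this yields `|B|⁴·S ≤ α⁴·E(B)`. Moreover `|B|·S ≤ α`, again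
because `ρ_Y` sums to `1`, so `αβ ≥ 1`, and `|B| ≥ 1/(βS)` turns the bound into
`|B|³ ≤ α⁴β·E(B) ≤ 4α⁹β⁴·E(B)`.
-/

open Finset

lemma sum_sq_pos_of_sum_ne_zero {ι : Type*} {s : Finset ι} {f : ι → ℝ}
    (h : ∑ i ∈ s, f i ≠ 0) : 0 < ∑ i ∈ s, f i ^ 2 := by
  obtain ⟨i, hi, hfi⟩ := exists_ne_zero_of_sum_ne_zero h
  exact sum_pos' (fun j _ => sq_nonneg (f j)) ⟨i, hi, by positivity⟩

lemma sq_sum_comp_le_sum_sq_card_fiber_mul {ι κ R : Type*} [Fintype κ] [DecidableEq κ]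
    [CommSemiring R] [LinearOrder R] [IsStrictOrderedRing R] [ExistsAddOfLE R]
    (s : Finset ι) (φ : ι → κ) (f : κ → R) :
    (∑ i ∈ s, f (φ i)) ^ 2 ≤ (∑ k, (#{i ∈ s | φ i = k} : R) ^ 2) * ∑ k, f k ^ 2 := by
  rw [← sum_fiberwise' s φ f]
  simp only [sum_const, nsmul_eq_mul]
  exact sum_mul_sq_le_sq_mul_sq _ _ _

section DivDensity

variable {G : Type*} [Group G] [Fintype G]

/-- The density `ρ_Y` of `X₁ X₂⁻¹` for independent `X₁, X₂` with density `ρ`. -/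
def divDensity (ρ : G → ℝ) (y : G) : ℝ := ∑ x, ρ x * ρ (y⁻¹ * x)

variable (ρ : G → ℝ)

lemma divDensity_eq_sum_mul_mul (y : G) : divDensity ρ y = ∑ w, ρ (y * w) * ρ w := by
  rw [divDensity, ← Equiv.sum_comp (Equiv.mulLeft y)]
  simp [mul_comm]

lemma sum_divDensity : ∑ y, divDensity ρ y = (∑ x, ρ x) ^ 2 := by
  simp_rw [divDensity_eq_sum_mul_mul, sq, sum_mul_sum]
  rw [sum_comm]
  refine sum_congr rfl fun w _ => ?_
  rw [← Equiv.sum_comp (Equiv.mulRight w⁻¹)]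
  simp [mul_comm]

lemma divDensity_le_sum_sq (y : G) : divDensity ρ y ≤ ∑ x, ρ x ^ 2 := by
  have h := sum_mul_sq_le_sq_mul_sq univ (fun w => ρ (y * w)) ρ
  have hshift : ∑ w, ρ (y * w) ^ 2 = ∑ x, ρ x ^ 2 :=
    Equiv.sum_comp (Equiv.mulLeft y) (fun x => ρ x ^ 2)
  rw [hshift, ← sq, ← divDensity_eq_sum_mul_mul] at h
  exact (abs_le_of_sq_le_sq' h (by positivity)).2

lemma sq_sum_divDensity_le (B : Finset G) :
    (∑ x ∈ B, divDensity ρ x) ^ 2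
      ≤ (∑ x, ρ x ^ 2) * ∑ p ∈ B ×ˢ B, divDensity ρ (p.1 * p.2⁻¹) := by
  have hsplit : ∑ x ∈ B, divDensity ρ x = ∑ w, ρ w * ∑ x ∈ B, ρ (x * w) := by
    simp_rw [divDensity_eq_sum_mul_mul, mul_sum]
    rw [sum_comm]
    simp_rw [mul_comm]
  have hsq : ∑ w, (∑ x ∈ B, ρ (x * w)) ^ 2 = ∑ p ∈ B ×ˢ B, divDensity ρ (p.1 * p.2⁻¹) := by
    simp_rw [sq, sum_mul_sum,
      ← sum_product' (s := B) (t := B) (fun x y => ρ (x * _) * ρ (y * _)),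
      divDensity_eq_sum_mul_mul]
    rw [sum_comm]
    refine sum_congr rfl fun p _ => ?_
    rw [← Equiv.sum_comp (Equiv.mulLeft p.2⁻¹)]
    simp [mul_assoc]
  rw [hsplit, ← hsq]
  exact sum_mul_sq_le_sq_mul_sq _ _ _

variable {ρ} (hρ : 0 ≤ ρ)
include hρ

lemma divDensity_nonneg (y : G) : 0 ≤ divDensity ρ y :=
  sum_nonneg fun x _ => mul_nonneg (hρ x) (hρ _)

lemma sum_divDensity_sq_le :
    ∑ y, divDensity ρ y ^ 2 ≤ (∑ x, ρ x ^ 2) * (∑ x, ρ x) ^ 2 := by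
  calc ∑ y, divDensity ρ y ^ 2 ≤ ∑ y, (∑ x, ρ x ^ 2) * divDensity ρ y :=
        sum_le_sum fun y _ => by
          rw [sq]
          exact mul_le_mul_of_nonneg_right (divDensity_le_sum_sq ρ y) (divDensity_nonneg hρ y)
    _ = (∑ x, ρ x ^ 2) * (∑ x, ρ x) ^ 2 := by rw [← mul_sum, sum_divDensity]

lemma pow_four_sum_divDensity_le [DecidableEq G] (B : Finset G) :
    (∑ x ∈ B, divDensity ρ x) ^ 4 ≤ (∑ x, ρ x ^ 2) ^ 3 * (∑ x, ρ x) ^ 2 *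
      ∑ k, (#{p ∈ B ×ˢ B | p.1 * p.2⁻¹ = k} : ℝ) ^ 2 := by
  set S := ∑ x, ρ x ^ 2
  set T := ∑ p ∈ B ×ˢ B, divDensity ρ (p.1 * p.2⁻¹)
  set E := ∑ k, (#{p ∈ B ×ˢ B | p.1 * p.2⁻¹ = k} : ℝ) ^ 2
  have hT : T ^ 2 ≤ E * (S * (∑ x, ρ x) ^ 2) :=
    (sq_sum_comp_le_sum_sq_card_fiber_mul _ _ _).trans
      (mul_le_mul_of_nonneg_left (sum_divDensity_sq_le hρ) (by positivity))
  calc (∑ x ∈ B, divDensity ρ x) ^ 4 = ((∑ x ∈ B, divDensity ρ x) ^ 2) ^ 2 := by ring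
    _ ≤ (S * T) ^ 2 := pow_le_pow_left₀ (by positivity) (sq_sum_divDensity_le ρ B) 2
    _ = S ^ 2 * T ^ 2 := by ring
    _ ≤ S ^ 2 * (E * (S * (∑ x, ρ x) ^ 2)) := by gcongr
    _ = S ^ 3 * (∑ x, ρ x) ^ 2 * E := by ring

variable (hρ1 : ∑ x, ρ x = 1) {α : ℝ} (hα : 0 < α) {B : Finset G}
  (hB : ∀ x ∈ B, (∑ x, ρ x ^ 2) / α ≤ divDensity ρ x)
include hρ1 hα hB

lemma card_mul_sum_sq_le_of_forall_le_divDensity : #B * ∑ x, ρ x ^ 2 ≤ α := by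
  have h := (card_nsmul_le_sum B _ _ hB).trans (sum_le_univ_sum_of_nonneg (divDensity_nonneg hρ))
  rwa [sum_divDensity, hρ1, one_pow, nsmul_eq_mul, mul_div_assoc', div_le_one hα] at h

lemma card_pow_four_mul_sum_sq_le_of_forall_le_divDensity [DecidableEq G] :
    (#B : ℝ) ^ 4 * ∑ x, ρ x ^ 2 ≤ α ^ 4 * ∑ k, (#{p ∈ B ×ˢ B | p.1 * p.2⁻¹ = k} : ℝ) ^ 2 := by
  have hS : 0 < ∑ x, ρ x ^ 2 := sum_sq_pos_of_sum_ne_zero (by simp [hρ1])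
  have h := (pow_le_pow_left₀ (by positivity) (card_nsmul_le_sum B _ _ hB) 4).trans
    (pow_four_sum_divDensity_le hρ B)
  rw [hρ1, one_pow, mul_one, nsmul_eq_mul, mul_div_assoc', div_pow,
    div_le_iff₀ (by positivity)] at h
  refine le_of_mul_le_mul_left ?_ (pow_pos hS 3)
  linear_combination h

end DivDensity

open scoped Classical in
theorem energy_of_popular_set_general {G : Type*} [Group G] [Fintype G]
    (ρ : G → ℝ) (hρ0 : ∀ x, 0 ≤ ρ x) (hρ1 : ∑ x, ρ x = 1)
    (ρY : G → ℝ) (hρY : ∀ y, ρY y = ∑ x, ρ x * ρ (y⁻¹ * x))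
    (S : ℝ) (hS' : S = ∑ x, ρ x ^ 2)
    (α : ℝ) (hα : 1 ≤ α)
    (A : Finset G) (hA : A = Finset.univ.filter fun x => S / α ≤ ρY x)
    (B : Finset G) (hBA : B ⊆ A) (β : ℝ) (hβ : 0 < β)
    (hB : 1 / (β * S) ≤ (B.card : ℝ))
    (rB : G → ℕ)
    (hrB : ∀ x : G, rB x = ((B ×ˢ B).filter fun q : G × G => q.1 * q.2⁻¹ = x).card) :
    (B.card : ℝ) ^ 3 / (4 * α ^ 9 * β ^ 4) ≤ ∑ x, (rB x : ℝ) ^ 2 := by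
  obtain rfl : ρY = divDensity ρ := funext hρY
  subst hS'
  have hα0 : 0 < α := by linarith
  have hpop : ∀ x ∈ B, (∑ x, ρ x ^ 2) / α ≤ divDensity ρ x := fun x hx => by
    simpa [hA] using hBA hx
  have hS : 0 < ∑ x, ρ x ^ 2 := sum_sq_pos_of_sum_ne_zero (by simp [hρ1])
  have hnS := card_mul_sum_sq_le_of_forall_le_divDensity hρ0 hρ1 hα0 hpop
  have hnE := card_pow_four_mul_sum_sq_le_of_forall_le_divDensity hρ0 hρ1 hα0 hpop
  simp only [← hrB] at hnE
  have hβnS : 1 ≤ β * (∑ x, ρ x ^ 2) * #B := by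
    rwa [div_le_iff₀ (by positivity), mul_comm] at hB
  have hαβ : 1 ≤ α * β := by nlinarith
  rw [div_le_iff₀ (by positivity)]
  calc (#B : ℝ) ^ 3 ≤ #B ^ 3 * (β * (∑ x, ρ x ^ 2) * #B) :=
        le_mul_of_one_le_right (by positivity) hβnS
    _ = β * (#B ^ 4 * ∑ x, ρ x ^ 2) := by ring
    _ ≤ β * (α ^ 4 * ∑ x, (rB x : ℝ) ^ 2) := by gcongr
    _ ≤ β * (α ^ 4 * ∑ x, (rB x : ℝ) ^ 2) * (4 * α ^ 2 * (α * β) ^ 3) := by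
      refine le_mul_of_one_le_right (by positivity) ?_
      nlinarith [one_le_pow₀ hα (n := 2), one_le_pow₀ hαβ (n := 3)]
    _ = (∑ x, (rB x : ℝ) ^ 2) * (4 * α ^ 9 * β ^ 4) := by ring

open scoped Classical in
/-- If `ρ` is a probability density on a finite group `G`, `ρ_Y(y) = ∑_x ρ(x)ρ(y⁻¹x)`,
`S = ρ_Y(e) = ∑_x ρ(x)²`, `A = {x : ρ_Y(x) ≥ S/α}` for some `α ≥ 1`, and `B ⊆ A` with
`|B| ≥ 1/(βS)` for some `β > 0`, then the representation function `r_B` of `B·B⁻¹`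
satisfies `∑_x r_B(x)² ≥ |B|³/(4α⁹β⁴)`. -/
theorem energy_of_popular_set {G : Type*} [Group G] [Fintype G]
    (ρ : G → ℝ) (hρ0 : ∀ x, 0 ≤ ρ x) (hρ1 : ∑ x, ρ x = 1)
    (ρY : G → ℝ) (hρY : ∀ y, ρY y = ∑ x, ρ x * ρ (y⁻¹ * x))
    (S : ℝ) (hS : S = ρY 1) (hS' : S = ∑ x, ρ x ^ 2)
    (α : ℝ) (hα : 1 ≤ α)
    (A : Finset G) (hA : A = Finset.univ.filter fun x => S / α ≤ ρY x)
    (B : Finset G) (hBA : B ⊆ A) (β : ℝ) (hβ : 0 < β)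
    (hB : 1 / (β * S) ≤ (B.card : ℝ))
    (rB : G → ℕ)
    (hrB : ∀ x : G, rB x = ((B ×ˢ B).filter fun q : G × G => q.1 * q.2⁻¹ = x).card) :
    (B.card : ℝ) ^ 3 / (4 * α ^ 9 * β ^ 4) ≤ ∑ x, (rB x : ℝ) ^ 2 :=
  energy_of_popular_set_general ρ hρ0 hρ1 ρY hρY S hS' α hα A hA B hBA β hβ hB rB hrB
end

section
/- Let p be a prime and let ρ: 𝔽_p → ℝ be a probability density (ρ ≥ 0, ∑_{x∈𝔽_p} ρ(x) = 1). Define ρ_Y(y) = ∑_{x∈𝔽_p} ρ(x)ρ(x−y). Let α ≥ 1 be such that ∑_{x∈𝔽_p} ∑_{y∈𝔽_p} ρ(x)·ρ_Y(y)·ρ_Y(xy) ≥ ρ_Y(0)/α, and assume ρ(0) ≤ 1/(4α) and ρ_Y(0) ≤ 1/(4α). Define A₁ = {y ∈ 𝔽_p : ρ_Y(y) ≥ ρ_Y(0)/(8α)} and A₂ = A₁ \ {0}. Then 1/(4α·ρ_Y(0)) ≤ |A₂| ≤ 8α/ρ_Y(0), and the representation function r₂(x) = #{(a,b) ∈ A₂×A₂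 : a·b⁻¹ = x} (with b⁻¹ the inverse in 𝔽_p^×) satisfies ∑_{x∈𝔽_p} r₂(x)·ρ(x) ≥ |A₂|/(32α²). -/
open scoped Classical in
/-- If `ρ` is a probability density on `𝔽_p` with `ρ_Y(y) = ∑_x ρ(x)ρ(x-y)`,
`∑_{x,y} ρ(x)ρ_Y(y)ρ_Y(xy) ≥ ρ_Y(0)/α`, `ρ(0) ≤ 1/(4α)`, `ρ_Y(0) ≤ 1/(4α)`, and
`A₂ = {y ≠ 0 : ρ_Y(y) ≥ ρ_Y(0)/(8α)}`, then `1/(4αρ_Y(0)) ≤ |A₂| ≤ 8α/ρ_Y(0)` and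
the representation function `r₂` of `A₂·A₂⁻¹` satisfies
`∑_x r₂(x)ρ(x) ≥ |A₂|/(32α²)`. -/
theorem popular_set_size_and_representation_bound (p : ℕ) [Fact p.Prime]
    (ρ : ZMod p → ℝ) (hρ0 : ∀ x, 0 ≤ ρ x) (hρ1 : ∑ x, ρ x = 1)
    (ρY : ZMod p → ℝ) (hρY : ∀ y, ρY y = ∑ x, ρ x * ρ (x - y))
    (α : ℝ) (hα : 1 ≤ α)
    (hmain : ρY 0 / α ≤ ∑ x, ∑ y, ρ x * ρY y * ρY (x * y))
    (h0 : ρ 0 ≤ 1 / (4 * α)) (hY0 : ρY 0 ≤ 1 / (4 * α))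
    (A₁ : Finset (ZMod p)) (hA₁ : A₁ = Finset.univ.filter fun y => ρY 0 / (8 * α) ≤ ρY y)
    (A₂ : Finset (ZMod p)) (hA₂ : A₂ = A₁.erase 0)
    (r₂ : ZMod p → ℕ)
    (hr₂ : ∀ x : ZMod p,
      r₂ x = ((A₂ ×ˢ A₂).filter fun q : ZMod p × ZMod p => q.1 * q.2⁻¹ = x).card) :
    (1 / (4 * α * ρY 0) ≤ (A₂.card : ℝ) ∧ (A₂.card : ℝ) ≤ 8 * α / ρY 0) ∧
      (A₂.card : ℝ) / (32 * α ^ 2) ≤ ∑ x, (r₂ x : ℝ) * ρ x := by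
  set c := ρY 0 with hc_def
  have hα0 : (0:ℝ) < α := lt_of_lt_of_le one_pos hα
  have hρY0 : ∀ y, 0 ≤ ρY y := fun y => by
    rw [hρY]; exact Finset.sum_nonneg fun x _ => mul_nonneg (hρ0 x) (hρ0 _)
  have hshift : ∀ x : ZMod p, ∑ y, ρ (x - y) = 1 := fun x => by
    rw [← hρ1]; exact Fintype.sum_equiv (Equiv.subLeft x) _ _ (fun y => rfl)
  have hρYsum : ∑ y, ρY y = 1 := by
    calc ∑ y, ρY y = ∑ y, ∑ x, ρ x * ρ (x - y) := by simp_rw [hρY]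
    _ = ∑ x, ∑ y, ρ x * ρ (x - y) := Finset.sum_comm
    _ = ∑ x, ρ x * ∑ y, ρ (x - y) := by simp_rw [Finset.mul_sum]
    _ = 1 := by simp_rw [hshift]; simpa using hρ1
  have hcpos : 0 < c := by
    obtain ⟨x₀, hx₀⟩ : ∃ x, ρ x ≠ 0 := by
      by_contra h; push_neg at h; simp [h] at hρ1
    have h1 : ρ x₀ * ρ (x₀ - 0) ≤ c := by
      rw [hc_def, hρY]
      exact Finset.single_le_sum (f := fun x => ρ x * ρ (x - 0))
        (fun x _ => mul_nonneg (hρ0 x) (hρ0 _)) (Finset.mem_univ x₀)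
    rw [sub_zero] at h1
    have hx0' := (hρ0 x₀).lt_of_ne (Ne.symm hx₀)
    nlinarith
  have hc2 : c = ∑ x, ρ x ^ 2 := by rw [hc_def, hρY]; simp [sq]
  have hρYle : ∀ y, ρY y ≤ c := fun y => by
    have h2 : (∑ x, ρ (x - y) ^ 2) = ∑ x, ρ x ^ 2 :=
      Fintype.sum_equiv (Equiv.subRight y) _ _ (fun x => rfl)
    have h3 : (ρY y)^2 ≤ c^2 := by
      rw [hρY y, hc2, sq (∑ x, ρ x ^ 2)]
      calc (∑ x, ρ x * ρ (x - y)) ^ 2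
          ≤ (∑ x, ρ x ^ 2) * ∑ x, ρ (x - y) ^ 2 :=
            Finset.sum_mul_sq_le_sq_mul_sq _ _ _
        _ = (∑ x, ρ x ^ 2) * ∑ x, ρ x ^ 2 := by rw [h2]
    nlinarith [hρY0 y, hcpos.le]
  have hmulsum : ∀ x : ZMod p, x ≠ 0 → ∑ y, ρY (x*y) = 1 := fun x hx => by
    rw [← hρYsum]
    exact Fintype.sum_equiv (Equiv.mulLeft₀ x hx) _ _ (fun y => rfl)
  have hmem : ∀ a : ZMod p, a ∈ A₂ ↔ a ≠ 0 ∧ c/(8*α) ≤ ρY a := by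
    intro a; rw [hA₂, hA₁]; simp [Finset.mem_erase, Finset.mem_filter, hc_def]
  have hkey : ∀ (x : ZMod p) (q : ZMod p × ZMod p), q.2 ≠ 0 → q.1 * q.2⁻¹ = x →
      q.1 = x * q.2 := by
    intro x q hq2 hq
    have := congrArg (· * q.2) hq
    simpa [mul_assoc, inv_mul_cancel₀ hq2] using this
  -- r₂ x ≤ |A₂|
  have hr2le : ∀ x : ZMod p, (r₂ x : ℝ) ≤ (A₂.card : ℝ) := fun x => by
    rw [hr₂]
    have : (((A₂ ×ˢ A₂).filter fun q : ZMod p × ZMod p => q.1 * q.2⁻¹ = x)).card ≤ A₂.card := by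
      apply Finset.card_le_card_of_injOn (fun q => q.2)
      · intro q hq; exact (Finset.mem_product.mp (Finset.mem_filter.mp hq).1).2
      · intro q hq q' hq' h
        simp only [Finset.coe_filter, Set.mem_setOf_eq] at hq hq'
        have h2 : q.2 ∈ A₂ := (Finset.mem_product.mp hq.1).2
        have h2' : q'.2 ∈ A₂ := (Finset.mem_product.mp hq'.1).2
        have hq2 : q.2 ≠ 0 := ((hmem q.2).mp h2).1
        have hq2' : q'.2 ≠ 0 := ((hmem q'.2).mp h2').1
        have e1 := hkey x q hq2 hq.2
        have e1' := hkey x q' hq2' hq'.2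
        have h' : q.2 = q'.2 := h
        exact Prod.ext (by rw [e1, e1', h']) h'
    exact_mod_cast this
  -- r₂ x counts {y ∈ A₂ : x*y ∈ A₂} for x ≠ 0
  have hr2eq : ∀ x : ZMod p, x ≠ 0 →
      r₂ x = (A₂.filter (fun y => x * y ∈ A₂)).card := by
    intro x hx
    rw [hr₂]
    apply Finset.card_bij' (fun q _ => q.2) (fun y _ => (x * y, y))
    · intro q hq
      rw [Finset.mem_filter] at hq ⊢
      obtain ⟨hqm, hqe⟩ := hq
      obtain ⟨h1, h2⟩ := Finset.mem_product.mp hqm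
      have hq2 : q.2 ≠ 0 := ((hmem q.2).mp h2).1
      exact ⟨h2, by rw [← hkey x q hq2 hqe]; exact h1⟩
    · intro y hy
      rw [Finset.mem_filter] at hy
      obtain ⟨h1, h2⟩ := hy
      have hy0 : y ≠ 0 := ((hmem y).mp h1).1
      refine Finset.mem_filter.mpr ⟨Finset.mem_product.mpr ⟨h2, h1⟩, ?_⟩
      simp [mul_assoc, mul_inv_cancel₀ hy0]
    · intro q hq
      rw [Finset.mem_filter] at hq
      obtain ⟨hqm, hqe⟩ := hq
      have hq2 : q.2 ≠ 0 := ((hmem q.2).mp (Finset.mem_product.mp hqm).2).1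
      exact Prod.ext (hkey x q hq2 hqe).symm rfl
    · intro y _; rfl
  -- inner sum bound for x ≠ 0
  have hinner : ∀ x : ZMod p, x ≠ 0 →
      ∑ y, ρY y * ρY (x*y) ≤ (r₂ x : ℝ) * c^2 + c/(2*α) := by
    intro x hx
    set G : Finset (ZMod p) := A₂.filter (fun y => x * y ∈ A₂) with hG
    have hfnn : ∀ y : ZMod p, 0 ≤ ρY y * ρY (x*y) := fun y => mul_nonneg (hρY0 _) (hρY0 _)
    have hgood : ∑ y ∈ G, ρY y * ρY (x*y) ≤ (r₂ x : ℝ) * c^2 := by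
      have h1 : ∑ y ∈ G, ρY y * ρY (x*y) ≤ ∑ _y ∈ G, c * c :=
        Finset.sum_le_sum (fun y _ => mul_le_mul (hρYle y) (hρYle _) (hρY0 _) hcpos.le)
      rw [Finset.sum_const, nsmul_eq_mul] at h1
      rw [hr2eq x hx]
      calc ∑ y ∈ G, ρY y * ρY (x*y) ≤ (G.card : ℝ) * (c * c) := h1
      _ = (G.card : ℝ) * c^2 := by ring
    set B1 : Finset (ZMod p) := {0} with hB1
    set B2 : Finset (ZMod p) := Finset.univ.filter (fun y => ρY y < c/(8*α)) with hB2
    set B3 : Finset (ZMod p) := Finset.univ.filter (fun y => ρY (x*y) < c/(8*α)) with hB3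
    have hsub : Finset.univ \ G ⊆ B1 ∪ B2 ∪ B3 := by
      intro y hy
      rw [Finset.mem_sdiff, hG, Finset.mem_filter] at hy
      simp only [Finset.mem_union, hB1, Finset.mem_singleton, hB2, hB3, Finset.mem_filter,
        Finset.mem_univ, true_and]
      by_cases hy0 : y = 0
      · exact Or.inl (Or.inl hy0)
      by_cases h1 : ρY y < c/(8*α)
      · exact Or.inl (Or.inr h1)
      by_cases h2 : ρY (x*y) < c/(8*α)
      · exact Or.inr h2
      exfalso
      exact hy.2 ⟨(hmem y).mpr ⟨hy0, le_of_not_gt h1⟩,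
        (hmem (x*y)).mpr ⟨mul_ne_zero hx hy0, le_of_not_gt h2⟩⟩
    have hB1sum : ∑ y ∈ B1, ρY y * ρY (x*y) ≤ c/(4*α) := by
      rw [hB1, Finset.sum_singleton, mul_zero]
      have := mul_le_mul_of_nonneg_left hY0 hcpos.le
      calc ρY 0 * ρY 0 = c * c := rfl
      _ ≤ c * (1/(4*α)) := this
      _ = c/(4*α) := by ring
    have hB2sum : ∑ y ∈ B2, ρY y * ρY (x*y) ≤ c/(8*α) := by
      calc ∑ y ∈ B2, ρY y * ρY (x*y) ≤ ∑ y ∈ B2, (c/(8*α)) * ρY (x*y) :=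
            Finset.sum_le_sum fun y hy =>
              mul_le_mul_of_nonneg_right (le_of_lt (Finset.mem_filter.mp hy).2) (hρY0 _)
        _ = (c/(8*α)) * ∑ y ∈ B2, ρY (x*y) := (Finset.mul_sum _ _ _).symm
        _ ≤ (c/(8*α)) * ∑ y, ρY (x*y) := by
            apply mul_le_mul_of_nonneg_left _ (by positivity)
            exact Finset.sum_le_sum_of_subset_of_nonneg (Finset.subset_univ _)
              (fun y _ _ => hρY0 _)
        _ = c/(8*α) := by rw [hmulsum x hx, mul_one]
    have hB3sum : ∑ y ∈ B3, ρY y * ρY (x*y) ≤ c/(8*α) := by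
      calc ∑ y ∈ B3, ρY y * ρY (x*y) ≤ ∑ y ∈ B3, ρY y * (c/(8*α)) :=
            Finset.sum_le_sum fun y hy =>
              mul_le_mul_of_nonneg_left (le_of_lt (Finset.mem_filter.mp hy).2) (hρY0 _)
        _ = (∑ y ∈ B3, ρY y) * (c/(8*α)) := (Finset.sum_mul _ _ _).symm
        _ ≤ (∑ y, ρY y) * (c/(8*α)) := by
            apply mul_le_mul_of_nonneg_right _ (by positivity)
            exact Finset.sum_le_sum_of_subset_of_nonneg (Finset.subset_univ _)
              (fun y _ _ => hρY0 _)
        _ = c/(8*α) := by rw [hρYsum, one_mul]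
    have hU1 : ∑ y ∈ B1 ∪ B2 ∪ B3, ρY y * ρY (x*y) ≤
        ∑ y ∈ B1 ∪ B2, ρY y * ρY (x*y) + ∑ y ∈ B3, ρY y * ρY (x*y) := by
      have h := Finset.sum_union_inter (s₁ := B1 ∪ B2) (s₂ := B3)
        (f := fun y => ρY y * ρY (x*y))
      have h0' : 0 ≤ ∑ y ∈ (B1 ∪ B2) ∩ B3, ρY y * ρY (x*y) :=
        Finset.sum_nonneg fun y _ => hfnn y
      linarith
    have hU2 : ∑ y ∈ B1 ∪ B2, ρY y * ρY (x*y) ≤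
        ∑ y ∈ B1, ρY y * ρY (x*y) + ∑ y ∈ B2, ρY y * ρY (x*y) := by
      have h := Finset.sum_union_inter (s₁ := B1) (s₂ := B2)
        (f := fun y => ρY y * ρY (x*y))
      have h0' : 0 ≤ ∑ y ∈ B1 ∩ B2, ρY y * ρY (x*y) :=
        Finset.sum_nonneg fun y _ => hfnn y
      linarith
    have hbad : ∑ y ∈ Finset.univ \ G, ρY y * ρY (x*y) ≤ c/(2*α) := by
      have h1 : ∑ y ∈ Finset.univ \ G, ρY y * ρY (x*y) ≤
          ∑ y ∈ B1 ∪ B2 ∪ B3, ρY y * ρY (x*y) :=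
        Finset.sum_le_sum_of_subset_of_nonneg hsub (fun y _ _ => hfnn y)
      have harith : c/(4*α) + c/(8*α) + c/(8*α) = c/(2*α) := by
        field_simp; ring
      linarith
    have hsplit := Finset.sum_sdiff (f := fun y => ρY y * ρY (x*y)) (Finset.subset_univ G)
    linarith
  set R := ∑ x, (r₂ x : ℝ) * ρ x with hR
  have hRnn : 0 ≤ R := Finset.sum_nonneg fun x _ => mul_nonneg (Nat.cast_nonneg _) (hρ0 x)
  -- the x = 0 term
  have hterm0 : ∑ y, ρ 0 * ρY y * ρY (0*y) = ρ 0 * c := by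
    simp_rw [zero_mul, ← hc_def]
    rw [← Finset.sum_mul, ← Finset.mul_sum, hρYsum, mul_one]
  have hSsplit := Finset.sum_erase_add Finset.univ
    (fun x => ∑ y, ρ x * ρY y * ρY (x*y)) (Finset.mem_univ (0 : ZMod p))
  have hrest : ∑ x ∈ Finset.univ.erase 0, ∑ y, ρ x * ρY y * ρY (x*y) ≤
      c^2 * R + c/(2*α) := by
    have h1 : ∀ x ∈ Finset.univ.erase 0,
        ∑ y, ρ x * ρY y * ρY (x*y) ≤ ρ x * ((r₂ x : ℝ) * c^2 + c/(2*α)) := by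
      intro x hx
      have hx0 : x ≠ 0 := (Finset.mem_erase.mp hx).1
      have he : ∑ y, ρ x * ρY y * ρY (x*y) = ρ x * ∑ y, ρY y * ρY (x*y) := by
        rw [Finset.mul_sum]
        exact Finset.sum_congr rfl fun y _ => by ring
      rw [he]
      exact mul_le_mul_of_nonneg_left (hinner x hx0) (hρ0 x)
    have h2 : ∑ x ∈ Finset.univ.erase 0, ∑ y, ρ x * ρY y * ρY (x*y) ≤
        ∑ x ∈ Finset.univ.erase 0, ρ x * ((r₂ x : ℝ) * c^2 + c/(2*α)) :=
      Finset.sum_le_sum h1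
    have h3 : ∑ x ∈ Finset.univ.erase 0, ρ x * ((r₂ x : ℝ) * c^2 + c/(2*α)) =
        c^2 * ∑ x ∈ Finset.univ.erase 0, (r₂ x : ℝ) * ρ x +
        (c/(2*α)) * ∑ x ∈ Finset.univ.erase 0, ρ x := by
      rw [Finset.mul_sum, Finset.mul_sum, ← Finset.sum_add_distrib]
      exact Finset.sum_congr rfl fun x _ => by ring
    have h4 : ∑ x ∈ Finset.univ.erase 0, (r₂ x : ℝ) * ρ x ≤ R := by
      rw [hR]
      exact Finset.sum_le_sum_of_subset_of_nonneg (Finset.subset_univ _)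
        (fun x _ _ => mul_nonneg (Nat.cast_nonneg _) (hρ0 x))
    have h5 : ∑ x ∈ Finset.univ.erase 0, ρ x ≤ 1 := by
      rw [← hρ1]
      exact Finset.sum_le_sum_of_subset_of_nonneg (Finset.subset_univ _)
        (fun x _ _ => hρ0 x)
    have hc2' : (0:ℝ) ≤ c^2 := by positivity
    have hc2α : (0:ℝ) ≤ c/(2*α) := by positivity
    calc ∑ x ∈ Finset.univ.erase 0, ∑ y, ρ x * ρY y * ρY (x*y)
        ≤ c^2 * ∑ x ∈ Finset.univ.erase 0, (r₂ x : ℝ) * ρ x +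
          (c/(2*α)) * ∑ x ∈ Finset.univ.erase 0, ρ x := by rw [← h3]; exact h2
      _ ≤ c^2 * R + (c/(2*α)) * 1 := by
          gcongr
      _ = c^2 * R + c/(2*α) := by ring
  -- combine: c/α ≤ ρ0*c + c²R + c/(2α)
  have hcomb : c/α ≤ ρ 0 * c + (c^2 * R + c/(2*α)) := by
    have hs : ∑ x ∈ Finset.univ.erase 0, ∑ y, ρ x * ρY y * ρY (x*y) +
        ∑ y, ρ 0 * ρY y * ρY ((0:ZMod p)*y) = ∑ x, ∑ y, ρ x * ρY y * ρY (x*y) := hSsplit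
    rw [hterm0] at hs
    linarith
  have hρ0c : ρ 0 * c ≤ c/(4*α) := by
    have := mul_le_mul_of_nonneg_right h0 hcpos.le
    calc ρ 0 * c ≤ (1/(4*α)) * c := this
    _ = c/(4*α) := by ring
  have hquarter : c/(4*α) ≤ c^2 * R := by
    have harith : c/α = c/(4*α) + c/(2*α) + c/(4*α) := by field_simp; ring
    linarith
  have hRlow : 1/(4*α*c) ≤ R := by
    rw [div_le_iff₀ (by positivity : (0:ℝ) < 4*α*c)]
    have h' : c ≤ c^2 * R * (4*α) := by
      rw [div_le_iff₀ (by positivity : (0:ℝ) < 4*α)] at hquarter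
      exact hquarter
    nlinarith [hcpos]
  -- |A₁| bound
  have hA1c : (A₁.card : ℝ) * c ≤ 8 * α := by
    have hsum1 : ∑ y ∈ A₁, (c/(8*α)) ≤ ∑ y ∈ A₁, ρY y :=
      Finset.sum_le_sum fun y hy => by
        rw [hA₁, Finset.mem_filter] at hy; exact hy.2
    have hsum2 : ∑ y ∈ A₁, ρY y ≤ 1 := by
      rw [← hρYsum]
      exact Finset.sum_le_sum_of_subset_of_nonneg (Finset.subset_univ _)
        (fun y _ _ => hρY0 y)
    rw [Finset.sum_const, nsmul_eq_mul] at hsum1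
    have h1 : (A₁.card : ℝ) * (c/(8*α)) ≤ 1 := le_trans hsum1 hsum2
    have h2 := mul_le_mul_of_nonneg_right h1 (by positivity : (0:ℝ) ≤ 8*α)
    calc (A₁.card : ℝ) * c = (A₁.card : ℝ) * (c/(8*α)) * (8*α) := by field_simp
    _ ≤ 1 * (8*α) := h2
    _ = 8*α := by ring
  have hcard_le : (A₂.card : ℝ) ≤ (A₁.card : ℝ) := by
    exact_mod_cast Finset.card_le_card (hA₂ ▸ Finset.erase_subset _ _)
  have hcard_up : (A₂.card : ℝ) ≤ 8 * α / c := by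
    rw [le_div_iff₀ hcpos]
    calc (A₂.card : ℝ) * c ≤ (A₁.card : ℝ) * c :=
      mul_le_mul_of_nonneg_right hcard_le hcpos.le
    _ ≤ 8 * α := hA1c
  have hRcard : R ≤ (A₂.card : ℝ) := by
    rw [hR]
    calc ∑ x, (r₂ x : ℝ) * ρ x ≤ ∑ x, (A₂.card : ℝ) * ρ x :=
      Finset.sum_le_sum fun x _ => mul_le_mul_of_nonneg_right (hr2le x) (hρ0 x)
    _ = (A₂.card : ℝ) * ∑ x, ρ x := by rw [Finset.mul_sum]
    _ = (A₂.card : ℝ) := by rw [hρ1, mul_one]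
  refine ⟨⟨le_trans hRlow hRcard, hcard_up⟩, ?_⟩
  have hlast : (A₂.card : ℝ) / (32 * α^2) ≤ 1/(4*α*c) := by
    have h1 : (A₂.card : ℝ) / (32 * α^2) ≤ (8*α/c) / (32*α^2) := by
      gcongr
    have h2 : (8*α/c) / (32*α^2) = 1/(4*α*c) := by
      field_simp; ring
    linarith
  exact le_trans hlast hRlow
end

section
/- Let p be a prime, let H be a subgroup of 𝔽_p^×, and let a ∈ 𝔽_p^×. Then |∑_{x∈H} e(ax/p)|⁴ ≤ p·|H|²; equivalently, |∑_{x∈H} e(ax/p)| ≤ p^{1/4}·|H|^{1/2}. -/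
open Finset

lemma Real.le_rpow_mul_rpow_of_pow_four_le {x P N : ℝ} (hP : 0 ≤ P) (hN : 0 ≤ N)
    (h : x ^ 4 ≤ P * N ^ 2) : x ≤ P ^ (1 / 4 : ℝ) * N ^ (1 / 2 : ℝ) := by
  refine le_of_pow_le_pow_left₀ four_ne_zero (by positivity) (h.trans_eq ?_)
  rw [mul_pow, ← Real.rpow_natCast (P ^ _), ← Real.rpow_natCast (N ^ _), ← Real.rpow_mul hP,
    ← Real.rpow_mul hN]
  norm_num

namespace AddChar

variable {R : Type*} [CommRing R] (ψ : AddChar R ℂ) (H : Subgroup Rˣ) [Fintype H]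

noncomputable def gaussPeriod (b : R) : ℂ :=
  ∑ x : H, ψ (b * (x : Rˣ))

lemma gaussPeriod_mul_mem (b : R) (h : H) :
    gaussPeriod ψ H (b * (h : Rˣ)) = gaussPeriod ψ H b :=
  Fintype.sum_equiv (Equiv.mulLeft h) _ _ fun x => by simp [mul_assoc]

variable [Fintype R]

lemma norm_gaussPeriod_le_card (b : R) : ‖gaussPeriod ψ H b‖ ≤ Fintype.card H :=
  (norm_sum_le _ _).trans_eq (by simp)

lemma sum_norm_sq_gaussPeriod {ψ : AddChar R ℂ} (hψ : ψ.IsPrimitive) :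
    ∑ b, ‖gaussPeriod ψ H b‖ ^ 2 = Fintype.card R * Fintype.card H := by
  classical
  have hexpand (b : R) : (‖gaussPeriod ψ H b‖ ^ 2 : ℂ)
      = ∑ x : H, ∑ y : H, ψ (b * ((x : Rˣ) - (y : Rˣ) : R)) := by
    rw [← Complex.mul_conj', gaussPeriod, map_sum, sum_mul_sum]
    simp only [← map_neg_eq_conj, ← map_add_eq_mul, ← mul_neg, ← mul_add, sub_eq_add_neg]
  have horth (x y : H) :
      ∑ b : R, ψ (b * ((x : Rˣ) - (y : Rˣ) : R)) = if x = y then (Fintype.card R : ℂ) else 0 := by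
    simp [sum_mulShift _ hψ, sub_eq_zero, Units.val_inj]
  apply Complex.ofReal_injective
  calc ((∑ b, ‖gaussPeriod ψ H b‖ ^ 2 : ℝ) : ℂ)
      = ∑ x : H, ∑ y : H, ∑ b : R, ψ (b * ((x : Rˣ) - (y : Rˣ) : R)) := by
        push_cast
        simp only [hexpand]
        rw [sum_comm]
        exact sum_congr rfl fun _ _ => sum_comm
    _ = ((Fintype.card R * Fintype.card H : ℝ) : ℂ) := by
        push_cast
        simp [horth, mul_comm]

lemma card_mul_norm_sq_gaussPeriod_le (a : Rˣ) :
    Fintype.card H * ‖gaussPeriod ψ H a‖ ^ 2 ≤ ∑ b, ‖gaussPeriod ψ H b‖ ^ 2 := by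
  let coset : H ↪ R :=
    ⟨fun h => (a * h : Rˣ), fun x y hxy => Subtype.ext (mul_left_cancel (Units.ext hxy))⟩
  calc Fintype.card H * ‖gaussPeriod ψ H a‖ ^ 2
      = ∑ b ∈ univ.map coset, ‖gaussPeriod ψ H b‖ ^ 2 := by
        simp [coset, Units.val_mul, gaussPeriod_mul_mem]
    _ ≤ ∑ b, ‖gaussPeriod ψ H b‖ ^ 2 := sum_le_univ_sum_of_nonneg fun _ => by positivity

lemma norm_sq_gaussPeriod_le_card {ψ : AddChar R ℂ} (hψ : ψ.IsPrimitive) (a : Rˣ) :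
    ‖gaussPeriod ψ H a‖ ^ 2 ≤ Fintype.card R := by
  have h := card_mul_norm_sq_gaussPeriod_le ψ H a
  rw [sum_norm_sq_gaussPeriod H hψ, mul_comm (Fintype.card R : ℝ)] at h
  exact le_of_mul_le_mul_left h (by exact_mod_cast Fintype.card_pos)

lemma norm_gaussPeriod_pow_four_le {ψ : AddChar R ℂ} (hψ : ψ.IsPrimitive) (a : Rˣ) :
    ‖gaussPeriod ψ H a‖ ^ 4 ≤ Fintype.card R * Fintype.card H ^ 2 :=
  calc ‖gaussPeriod ψ H a‖ ^ 4 = ‖gaussPeriod ψ H a‖ ^ 2 * ‖gaussPeriod ψ H a‖ ^ 2 := by ring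
    _ ≤ (Fintype.card R : ℝ) * (Fintype.card H : ℝ) ^ 2 :=
      mul_le_mul (norm_sq_gaussPeriod_le_card H hψ a)
        (pow_le_pow_left₀ (norm_nonneg _) (norm_gaussPeriod_le_card ψ H a) 2)
        (by positivity) (by positivity)

end AddChar

open scoped Classical in
/-- For `p` prime, `H` a subgroup of `𝔽_p^×` and `a ∈ 𝔽_p^×`, one has
`|∑_{x∈H} e(ax/p)|⁴ ≤ p·|H|²`, equivalently `|∑_{x∈H} e(ax/p)| ≤ p^{1/4}·|H|^{1/2}`. -/
theorem fourth_moment_subgroup_sum_bound (p : ℕ) [Fact p.Prime]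
    (H : Subgroup (ZMod p)ˣ) (a : (ZMod p)ˣ) :
    ‖∑ x : H, eChar p ((a * (x : (ZMod p)ˣ) : (ZMod p)ˣ) : ZMod p)‖ ^ 4
        ≤ (p : ℝ) * (Nat.card H : ℝ) ^ 2 ∧
      ‖∑ x : H, eChar p ((a * (x : (ZMod p)ˣ) : (ZMod p)ˣ) : ZMod p)‖
        ≤ (p : ℝ) ^ ((1 : ℝ) / 4) * (Nat.card H : ℝ) ^ ((1 : ℝ) / 2) := by
  have : NeZero p := ⟨(Fact.out : p.Prime).ne_zero⟩
  have hS : ∑ x : H, eChar p ((a * (x : (ZMod p)ˣ) : (ZMod p)ˣ) : ZMod p)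
      = AddChar.gaussPeriod ZMod.stdAddChar H (a : ZMod p) :=
    sum_congr rfl fun x _ => by rw [eChar_eq_stdAddChar, Units.val_mul]
  have h4 := AddChar.norm_gaussPeriod_pow_four_le H (ZMod.isPrimitive_stdAddChar p) a
  rw [ZMod.card, ← Nat.card_eq_fintype_card] at h4
  rw [hS]
  exact ⟨h4, Real.le_rpow_mul_rpow_of_pow_four_le p.cast_nonneg (Nat.card H).cast_nonneg h4⟩
end
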